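/- arXiv:2201.00002 — 6 statements merged into one kernel-verified Lean document; each statement's English description precedes it below -/
import Mathlib

section
/- Filon–Simpson quadrature is exact on the quadratic interpolant: let λ ∈ ℂ, Δt > 0 with z := Δt·λ ≠ 0, let a ∈ ℝ, and let G₋, G₀, G₊ ∈ ℂ. Let P(τ) be the unique quadratic polynomial with P(a) = G₋, P(a+Δt) = G₀, P(a+2Δt) = G₊, i.e. P(τ) = G₋ (τ−a−Δt)(τ−a−2Δt)/(2Δt²) − G₀ (τ−a)(τ−a−2Δt)/Δt² + G₊ (τ−a)(τ−a−Δt)/(2Δt²). Then ∫_{a}^{a+2Δt} e^{(a−τ)λ} P(τ) dτ = q₁ G₋ + q₂ G₀ + q₃ G₊, where q₁ = Δt(−z e^{−2z} − 2e^{−2z} + 2z² − 3z + 2)/(2z³), q₂ = Δt(2z e^{−2z} + 2e^{−2z} + 2z − 2)/z³, and q₃ = Δt(−2z² e^{−2z} − 3z e^{−2z} − 2e^{−2z} − z + 2)/(2z³). -/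
/-!
Shifting `τ = a + s` turns the integrand into `exp (-λ s) p(s)` with `p` the quadratic
interpolant written in powers of `s`. For `c ≠ 0` the function
`exp (c s) (p / c - p' / c² + p'' / c³)` is a primitive of `exp (c s) p(s)`; evaluating it at
`s = 2Δt` and `s = 0` and collecting the coefficients of `G₋, G₀, G₊` gives the weights `q₁, q₂, q₃`.
-/

open MeasureTheory intervalIntegral

noncomputable def expQuadPrimitive (c A B C : ℂ) (s : ℝ) : ℂ :=
  Complex.exp (c * s) * ((A * s ^ 2 + B * s + C) / c - (2 * A * s + B) / c ^ 2 + 2 * A / c ^ 3)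

lemma hasDerivAt_expQuadPrimitive {c : ℂ} (hc : c ≠ 0) (A B C : ℂ) (s : ℝ) :
    HasDerivAt (expQuadPrimitive c A B C)
      (Complex.exp (c * s) * (A * s ^ 2 + B * s + C)) s := by
  have hexp : HasDerivAt (fun t : ℂ => Complex.exp (c * t)) (Complex.exp (c * s) * c) s := by
    simpa using ((hasDerivAt_id (s : ℂ)).const_mul c).cexp
  have hpoly : HasDerivAt
      (fun t : ℂ => (A * t ^ 2 + B * t + C) / c - (2 * A * t + B) / c ^ 2 + 2 * A / c ^ 3)
      ((2 * A * s + B) / c - 2 * A / c ^ 2) s :=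
    (((((hasDerivAt_id (s : ℂ)).pow 2).const_mul A).add
      ((hasDerivAt_id (s : ℂ)).const_mul B)).add_const C).div_const c |>.sub
      ((((hasDerivAt_id (s : ℂ)).const_mul (2 * A)).add_const B).div_const (c ^ 2))
      |>.add_const (2 * A / c ^ 3) |>.congr_deriv (by simp; ring)
  refine (hexp.mul hpoly).comp_ofReal.congr_deriv ?_
  field_simp
  ring

lemma integral_exp_mul_quadratic {c : ℂ} (hc : c ≠ 0) (A B C : ℂ) (a b : ℝ) :
    ∫ s in a..b, Complex.exp (c * s) * (A * s ^ 2 + B * s + C)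
      = expQuadPrimitive c A B C b - expQuadPrimitive c A B C a :=
  integral_eq_sub_of_hasDerivAt (fun s _ => hasDerivAt_expQuadPrimitive hc A B C s)
    ((by fun_prop : Continuous fun s : ℝ =>
      Complex.exp (c * s) * (A * s ^ 2 + B * s + C)).intervalIntegrable a b)

theorem filon_simpson_exact_on_quadratic_general (lam : ℂ) (Δt : ℝ)
    (z : ℂ) (hzdef : z = (Δt : ℂ) * lam) (hz : z ≠ 0)
    (a : ℝ) (Gm G0 Gp : ℂ)
    (P : ℝ → ℂ)
    (hP : ∀ τ : ℝ, P τ =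
      Gm * ((τ - a - Δt : ℝ) : ℂ) * ((τ - a - 2 * Δt : ℝ) : ℂ) / (2 * (Δt : ℂ) ^ 2)
      - G0 * ((τ - a : ℝ) : ℂ) * ((τ - a - 2 * Δt : ℝ) : ℂ) / ((Δt : ℂ) ^ 2)
      + Gp * ((τ - a : ℝ) : ℂ) * ((τ - a - Δt : ℝ) : ℂ) / (2 * (Δt : ℂ) ^ 2))
    (q₁ q₂ q₃ : ℂ)
    (hq₁ : q₁ = (Δt : ℂ) * (-z * Complex.exp (-2 * z) - 2 * Complex.exp (-2 * z)
      + 2 * z ^ 2 - 3 * z + 2) / (2 * z ^ 3))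
    (hq₂ : q₂ = (Δt : ℂ) * (2 * z * Complex.exp (-2 * z) + 2 * Complex.exp (-2 * z)
      + 2 * z - 2) / z ^ 3)
    (hq₃ : q₃ = (Δt : ℂ) * (-2 * z ^ 2 * Complex.exp (-2 * z) - 3 * z * Complex.exp (-2 * z)
      - 2 * Complex.exp (-2 * z) - z + 2) / (2 * z ^ 3)) :
    (∫ τ in a..(a + 2 * Δt), Complex.exp (((a - τ : ℝ) : ℂ) * lam) * P τ)
      = q₁ * Gm + q₂ * G0 + q₃ * Gp := by
  subst hzdef
  have hΔt : (Δt : ℂ) ≠ 0 := left_ne_zero_of_mul hz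
  have hlam : lam ≠ 0 := right_ne_zero_of_mul hz
  -- the coefficients of `P (a + s)` as a polynomial in `s`
  set A := (Gm - 2 * G0 + Gp) / (2 * (Δt : ℂ) ^ 2)
  set B := (-3 * Gm + 4 * G0 - Gp) / (2 * (Δt : ℂ))
  have hshift : ∀ s : ℝ, Complex.exp (((a - (a + s) : ℝ) : ℂ) * lam) * P (a + s)
      = Complex.exp (-lam * s) * (A * s ^ 2 + B * s + Gm) := by
    intro s
    rw [hP]
    simp only [A, B]
    push_cast
    congr 1
    · ring_nf
    · field_simp
      ring
  have hsub := integral_comp_add_left (a := 0) (b := 2 * Δt)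
    (fun τ : ℝ => Complex.exp (((a - τ : ℝ) : ℂ) * lam) * P τ) a
  rw [add_zero] at hsub
  rw [← hsub]
  simp only [hshift]
  rw [integral_exp_mul_quadratic (neg_ne_zero.mpr hlam), expQuadPrimitive, expQuadPrimitive,
    hq₁, hq₂, hq₃]
  have hexp_end : Complex.exp (-lam * ((2 * Δt : ℝ) : ℂ)) = Complex.exp (-2 * (Δt * lam)) := by
    push_cast; ring_nf
  rw [hexp_end]
  push_cast
  simp only [mul_zero, Complex.exp_zero, A, B]
  field_simp
  ring

/-- Filon–Simpson quadrature is exact on the quadratic interpolant. -/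
theorem filon_simpson_exact_on_quadratic (lam : ℂ) (Δt : ℝ) (hΔt : 0 < Δt)
    (z : ℂ) (hzdef : z = (Δt : ℂ) * lam) (hz : z ≠ 0)
    (a : ℝ) (Gm G0 Gp : ℂ)
    (P : ℝ → ℂ)
    (hP : ∀ τ : ℝ, P τ =
      Gm * ((τ - a - Δt : ℝ) : ℂ) * ((τ - a - 2 * Δt : ℝ) : ℂ) / (2 * (Δt : ℂ) ^ 2)
      - G0 * ((τ - a : ℝ) : ℂ) * ((τ - a - 2 * Δt : ℝ) : ℂ) / ((Δt : ℂ) ^ 2)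
      + Gp * ((τ - a : ℝ) : ℂ) * ((τ - a - Δt : ℝ) : ℂ) / (2 * (Δt : ℂ) ^ 2))
    (q₁ q₂ q₃ : ℂ)
    (hq₁ : q₁ = (Δt : ℂ) * (-z * Complex.exp (-2 * z) - 2 * Complex.exp (-2 * z)
      + 2 * z ^ 2 - 3 * z + 2) / (2 * z ^ 3))
    (hq₂ : q₂ = (Δt : ℂ) * (2 * z * Complex.exp (-2 * z) + 2 * Complex.exp (-2 * z)
      + 2 * z - 2) / z ^ 3)
    (hq₃ : q₃ = (Δt : ℂ) * (-2 * z ^ 2 * Complex.exp (-2 * z) - 3 * z * Complex.exp (-2 * z)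
      - 2 * Complex.exp (-2 * z) - z + 2) / (2 * z ^ 3)) :
    (∫ τ in a..(a + 2 * Δt), Complex.exp (((a - τ : ℝ) : ℂ) * lam) * P τ)
      = q₁ * Gm + q₂ * G0 + q₃ * Gp :=
  filon_simpson_exact_on_quadratic_general lam Δt z hzdef hz a Gm G0 Gp P hP q₁ q₂ q₃ hq₁ hq₂ hq₃
end

section
/- Simpson limit of the Filon–Simpson coefficients: with z ∈ ℂ \ {0} and Δt > 0, define q₁(z) = Δt(−z e^{−2z} − 2e^{−2z} + 2z² − 3z + 2)/(2z³), q₂(z) = Δt(2z e^{−2z} + 2e^{−2z} + 2z − 2)/z³, q₃(z) = Δt(−2z² e^{−2z} − 3z e^{−2z} − 2e^{−2z} − z + 2)/(2z³). Then as z → 0 one has q₁(z) → Δt/3, q₂(z) → 4Δt/3, and q₃(z) → Δt/3 (the classical Simpson weights). -/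
/-!
Write `e^{-2z} = 1 - 2z + 2z² + z³ R(z)`. Substituting this into the numerators cancels every
term of order below `z³`, so each coefficient becomes a polynomial in `z` and `R(z)`. Since
`R(z) → (-2)³/3! = -4/3` (the third Taylor coefficient of `e^{-2z}`), the limits follow by
continuity.
-/

open Filter Topology

open Nat Finset in
theorem Complex.tendsto_exp_sub_sum_range_div_pow (n : ℕ) :
    Tendsto (fun x => (exp x - ∑ i ∈ range n, x ^ i / i !) / x ^ n) (𝓝[≠] 0) (𝓝 (n ! : ℂ)⁻¹) := by
  have hrem : Tendsto (fun x => (exp x - ∑ i ∈ range (n + 1), x ^ i / i !) / x ^ n + (n ! : ℂ)⁻¹)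
      (𝓝[≠] 0) (𝓝 (0 + (n ! : ℂ)⁻¹)) :=
    ((exp_sub_sum_range_succ_isLittleO_pow n).tendsto_div_nhds_zero.mono_left
      nhdsWithin_le_nhds).add_const _
  rw [zero_add] at hrem
  refine hrem.congr' ?_
  filter_upwards [self_mem_nhdsWithin] with x (hx : x ≠ 0)
  rw [sum_range_succ]
  field_simp
  ring

theorem tendsto_exp_neg_two_mul_remainder :
    Tendsto (fun z : ℂ => (Complex.exp (-2 * z) - 1 + 2 * z - 2 * z ^ 2) / z ^ 3)
      (𝓝[≠] 0) (𝓝 (-4 / 3)) := by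
  have hscale : Tendsto (fun z : ℂ => -2 * z) (𝓝[≠] 0) (𝓝[≠] 0) :=
    tendsto_nhdsWithin_iff.2 ⟨((continuous_const_mul _).tendsto' 0 0 (by simp)).mono_left
      nhdsWithin_le_nhds, eventually_nhdsWithin_of_forall fun z hz => by simpa using hz⟩
  have h := ((Complex.tendsto_exp_sub_sum_range_div_pow 3).comp hscale).const_mul (-8)
  rw [show (-8 : ℂ) * (Nat.factorial 3 : ℂ)⁻¹ = -4 / 3 by norm_num [Nat.factorial]] at h
  refine h.congr' ?_
  filter_upwards [self_mem_nhdsWithin] with z (hz : z ≠ 0)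
  simp only [Function.comp_apply, Finset.sum_range_succ, Finset.sum_range_zero, Nat.factorial]
  field_simp
  ring

theorem tendsto_of_eq_comp_exp_neg_two_mul_remainder {f : ℂ → ℂ} (g : ℂ → ℂ → ℂ)
    (hg : Continuous (Function.uncurry g))
    (hf : ∀ z ≠ 0, f z = g z ((Complex.exp (-2 * z) - 1 + 2 * z - 2 * z ^ 2) / z ^ 3))
    {M : ℂ} (hM : g 0 (-4 / 3) = M) : Tendsto f (𝓝[≠] 0) (𝓝 M) := by
  have hz : Tendsto (fun z : ℂ => z) (𝓝[≠] 0) (𝓝 0) := tendsto_id.mono_left nhdsWithin_le_nhds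
  refine hM ▸ (hg.tendsto (0, -4 / 3) |>.comp (hz.prodMk_nhds
    tendsto_exp_neg_two_mul_remainder)).congr' ?_
  filter_upwards [self_mem_nhdsWithin] with z (hz : z ≠ 0)
  exact (hf z hz).symm

theorem filon_simpson_coeffs_simpson_limit_general (Δt : ℝ) :
    Tendsto (fun z : ℂ => (Δt : ℂ) * (-z * Complex.exp (-2 * z) - 2 * Complex.exp (-2 * z)
        + 2 * z ^ 2 - 3 * z + 2) / (2 * z ^ 3))
      (nhdsWithin 0 {(0 : ℂ)}ᶜ) (nhds ((Δt : ℂ) / 3)) ∧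
    Tendsto (fun z : ℂ => (Δt : ℂ) * (2 * z * Complex.exp (-2 * z) + 2 * Complex.exp (-2 * z)
        + 2 * z - 2) / z ^ 3)
      (nhdsWithin 0 {(0 : ℂ)}ᶜ) (nhds (4 * (Δt : ℂ) / 3)) ∧
    Tendsto (fun z : ℂ => (Δt : ℂ) * (-2 * z ^ 2 * Complex.exp (-2 * z)
        - 3 * z * Complex.exp (-2 * z) - 2 * Complex.exp (-2 * z) - z + 2) / (2 * z ^ 3))
      (nhdsWithin 0 {(0 : ℂ)}ᶜ) (nhds ((Δt : ℂ) / 3)) :=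
  ⟨tendsto_of_eq_comp_exp_neg_two_mul_remainder (fun z r => Δt * (-1 - (z + 2) * r / 2))
      (by fun_prop) (fun z hz => by field_simp; ring) (by ring),
    tendsto_of_eq_comp_exp_neg_two_mul_remainder (fun z r => Δt * (4 + (2 * z + 2) * r))
      (by fun_prop) (fun z hz => by field_simp; ring) (by ring),
    tendsto_of_eq_comp_exp_neg_two_mul_remainder
      (fun z r => Δt * (-2 - 4 * z + (-2 * z ^ 2 - 3 * z - 2) * r) / 2)
      (by fun_prop) (fun z hz => by field_simp; ring) (by ring)⟩

/-- Simpson limit of the Filon–Simpson coefficients as `z → 0`. -/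
theorem filon_simpson_coeffs_simpson_limit (Δt : ℝ) (hΔt : 0 < Δt) :
    Tendsto (fun z : ℂ => (Δt : ℂ) * (-z * Complex.exp (-2 * z) - 2 * Complex.exp (-2 * z)
        + 2 * z ^ 2 - 3 * z + 2) / (2 * z ^ 3))
      (nhdsWithin 0 {(0 : ℂ)}ᶜ) (nhds ((Δt : ℂ) / 3)) ∧
    Tendsto (fun z : ℂ => (Δt : ℂ) * (2 * z * Complex.exp (-2 * z) + 2 * Complex.exp (-2 * z)
        + 2 * z - 2) / z ^ 3)
      (nhdsWithin 0 {(0 : ℂ)}ᶜ) (nhds (4 * (Δt : ℂ) / 3)) ∧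
    Tendsto (fun z : ℂ => (Δt : ℂ) * (-2 * z ^ 2 * Complex.exp (-2 * z)
        - 3 * z * Complex.exp (-2 * z) - 2 * Complex.exp (-2 * z) - z + 2) / (2 * z ^ 3))
      (nhdsWithin 0 {(0 : ℂ)}ᶜ) (nhds ((Δt : ℂ) / 3)) :=
  filon_simpson_coeffs_simpson_limit_general Δt
end

section
/- Cubic Filon quadrature for the initialization integral: let λ ∈ ℂ, Δt > 0 with z := Δt·λ ≠ 0, and let G₀, G₁, G₂, G₃ ∈ ℂ. Let P₃(τ) be the unique cubic polynomial with P₃(0) = G₀, P₃(Δt) = G₁, P₃(2Δt) = G₂, P₃(3Δt) = G₃. Then ∫₀^{3Δt} e^{(Δt−τ)λ} P₃(τ) dτ = e^{Δtλ}( q₄ G₀ + q₅ G₁ + q₆ G₂ + q₇ G₃ ), where q₄ = Δt(2z²e^{−3z} + 6z e^{−3z} + 6e^{−3z} + 6z³ + 12z − 11z² − 6)/(6z⁴), q₅ = Δt(−3z²e^{−3z} − 8z e^{−3z} − 6e^{−3z} + 6z² − 10z + 6)/(2z⁴), q₆ = Δt(6z²e^{−3z} + 10z e^{−3z} + 6e^{−3z}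 − 3z² + 8z − 6)/(2z⁴), q₇ = Δt(−6z³e^{−3z} − 11z²e^{−3z} − 12z e^{−3z} − 6e^{−3z} + 2z² − 6z + 6)/(6z⁴). -/
/-!
Substituting `τ = Δt s` turns the integral into `Δt e^z ∫₀³ e^{-zs} p(s) ds`, where `p` is the cubic
interpolating `G₀, …, G₃` at `s = 0, 1, 2, 3`. Integrating by parts until `p` is differentiated
away, `-e^{-zs} (p/z + p'/z² + p''/z³ + p'''/z⁴)` is a primitive of `e^{-zs} p(s)`; its values at
`s = 0` and `s = 3` are linear in the `Gₖ`, with the coefficients `qₖ / Δt`.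
-/

open intervalIntegral Complex

namespace CubicFilon

def cubic (a b c d s : ℂ) : ℂ := a + b * s + c * s ^ 2 + d * s ^ 3

lemma hasDerivAt_cubic (a b c d s : ℂ) :
    HasDerivAt (cubic a b c d) (cubic b (2 * c) (3 * d) 0 s) s :=
  (((((hasDerivAt_id s).const_mul b).const_add a).add
    ((hasDerivAt_pow 2 s).const_mul c)).add ((hasDerivAt_pow 3 s).const_mul d)).congr_deriv
    (by simp only [cubic]; push_cast; ring)

noncomputable def cubicExpPrimitive (z a b c d s : ℂ) : ℂ :=
  cubic a b c d s / z + cubic b (2 * c) (3 * d) 0 s / z ^ 2 + cubic (2 * c) (6 * d) 0 0 s / z ^ 3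
    + cubic (6 * d) 0 0 0 s / z ^ 4

lemma hasDerivAt_cubicExpPrimitive {z : ℂ} (hz : z ≠ 0) (a b c d s : ℂ) :
    HasDerivAt (fun s => -exp (-(z * s)) * cubicExpPrimitive z a b c d s)
      (exp (-(z * s)) * cubic a b c d s) s := by
  have hexp : HasDerivAt (fun s => -exp (-(z * s))) (exp (-(z * s)) * z) s :=
    ((hasDerivAt_id s).const_mul z).neg.cexp.neg.congr_deriv (by simp)
  have hpoly := ((((hasDerivAt_cubic a b c d s).div_const z).add
    ((hasDerivAt_cubic b (2 * c) (3 * d) 0 s).div_const (z ^ 2))).add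
    ((hasDerivAt_cubic (2 * c) (6 * d) 0 0 s).div_const (z ^ 3))).add
    ((hasDerivAt_cubic (6 * d) 0 0 0 s).div_const (z ^ 4))
  refine (hexp.mul hpoly).congr_deriv ?_
  simp only [cubic, Pi.add_apply]
  field_simp
  ring

theorem integral_cexp_neg_mul_cubic {z : ℂ} (hz : z ≠ 0) (a b c d : ℂ) (T : ℝ) :
    ∫ s in (0 : ℝ)..T, exp (-(z * s)) * cubic a b c d s
      = cubicExpPrimitive z a b c d 0 - exp (-(z * T)) * cubicExpPrimitive z a b c d T := by
  rw [integral_eq_sub_of_hasDerivAt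
    (fun s _ => (hasDerivAt_cubicExpPrimitive hz a b c d s).comp_ofReal)
    ((by unfold cubic; fun_prop : Continuous _).intervalIntegrable _ _)]
  simp only [ofReal_zero, mul_zero, neg_zero, exp_zero]
  ring

end CubicFilon

open CubicFilon

/-- Cubic Filon quadrature for the initialization integral. -/
theorem cubic_filon_initialization (lam : ℂ) (Δt : ℝ) (hΔt : 0 < Δt)
    (z : ℂ) (hzdef : z = (Δt : ℂ) * lam) (hz : z ≠ 0)
    (G0 G1 G2 G3 : ℂ)
    (P : ℝ → ℂ)
    (hP : ∀ τ : ℝ, P τ =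
      -G0 * ((τ - Δt : ℝ) : ℂ) * ((τ - 2 * Δt : ℝ) : ℂ) * ((τ - 3 * Δt : ℝ) : ℂ)
        / (6 * (Δt : ℂ) ^ 3)
      + G1 * ((τ : ℝ) : ℂ) * ((τ - 2 * Δt : ℝ) : ℂ) * ((τ - 3 * Δt : ℝ) : ℂ)
        / (2 * (Δt : ℂ) ^ 3)
      - G2 * ((τ : ℝ) : ℂ) * ((τ - Δt : ℝ) : ℂ) * ((τ - 3 * Δt : ℝ) : ℂ)
        / (2 * (Δt : ℂ) ^ 3)
      + G3 * ((τ : ℝ) : ℂ) * ((τ - Δt : ℝ) : ℂ) * ((τ - 2 * Δt : ℝ) : ℂ)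
        / (6 * (Δt : ℂ) ^ 3))
    (q₄ q₅ q₆ q₇ : ℂ)
    (hq₄ : q₄ = (Δt : ℂ) * (2 * z ^ 2 * Complex.exp (-3 * z) + 6 * z * Complex.exp (-3 * z)
      + 6 * Complex.exp (-3 * z) + 6 * z ^ 3 + 12 * z - 11 * z ^ 2 - 6) / (6 * z ^ 4))
    (hq₅ : q₅ = (Δt : ℂ) * (-3 * z ^ 2 * Complex.exp (-3 * z) - 8 * z * Complex.exp (-3 * z)
      - 6 * Complex.exp (-3 * z) + 6 * z ^ 2 - 10 * z + 6) / (2 * z ^ 4))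
    (hq₆ : q₆ = (Δt : ℂ) * (6 * z ^ 2 * Complex.exp (-3 * z) + 10 * z * Complex.exp (-3 * z)
      + 6 * Complex.exp (-3 * z) - 3 * z ^ 2 + 8 * z - 6) / (2 * z ^ 4))
    (hq₇ : q₇ = (Δt : ℂ) * (-6 * z ^ 3 * Complex.exp (-3 * z) - 11 * z ^ 2 * Complex.exp (-3 * z)
      - 12 * z * Complex.exp (-3 * z) - 6 * Complex.exp (-3 * z) + 2 * z ^ 2 - 6 * z + 6)
      / (6 * z ^ 4)) :
    (∫ τ in (0:ℝ)..(3 * Δt), Complex.exp (((Δt - τ : ℝ) : ℂ) * lam) * P τ)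
      = Complex.exp ((Δt : ℂ) * lam) * (q₄ * G0 + q₅ * G1 + q₆ * G2 + q₇ * G3) := by
  have hΔ : (Δt : ℂ) ≠ 0 := ofReal_ne_zero.mpr hΔt.ne'
  have hsubst : ∫ τ in (0:ℝ)..(3 * Δt), exp (((Δt - τ : ℝ) : ℂ) * lam) * P τ
      = Δt • ∫ s in (0:ℝ)..3, exp (((Δt - Δt * s : ℝ) : ℂ) * lam) * P (Δt * s) := by
    have h := smul_integral_comp_mul_left (a := 0) (b := 3)
      (fun τ : ℝ => exp (((Δt - τ : ℝ) : ℂ) * lam) * P τ) Δt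
    rw [mul_zero, mul_comm] at h
    exact h.symm
  have hexp (s : ℝ) : exp (((Δt - Δt * s : ℝ) : ℂ) * lam) = exp z * exp (-(z * s)) := by
    rw [hzdef, ← exp_add]
    congr 1
    push_cast
    ring
  have hP_scaled (s : ℝ) : P (Δt * s) = cubic G0 ((-11 * G0 + 18 * G1 - 9 * G2 + 2 * G3) / 6)
      ((2 * G0 - 5 * G1 + 4 * G2 - G3) / 2) ((-G0 + 3 * G1 - 3 * G2 + G3) / 6) s := by
    rw [hP, cubic]
    push_cast
    field_simp
    ring
  rw [hsubst, integral_congr fun s _ => by rw [hexp, hP_scaled, mul_assoc],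
    intervalIntegral.integral_const_mul, integral_cexp_neg_mul_cubic hz,
    show -(z * ((3 : ℝ) : ℂ)) = -3 * z by push_cast; ring,
    hq₄, hq₅, hq₆, hq₇]
  simp only [cubicExpPrimitive, cubic, real_smul, ← hzdef]
  push_cast
  field_simp
  ring
end

section
/- Three-eighths-rule limit of the cubic Filon coefficients: with z ∈ ℂ \ {0} and Δt > 0, define q₄(z) = Δt(2z²e^{−3z} + 6z e^{−3z} + 6e^{−3z} + 6z³ + 12z − 11z² − 6)/(6z⁴), q₅(z) = Δt(−3z²e^{−3z} − 8z e^{−3z} − 6e^{−3z} + 6z² − 10z + 6)/(2z⁴), q₆(z) = Δt(6z²e^{−3z} + 10z e^{−3z} + 6e^{−3z} − 3z² + 8z − 6)/(2z⁴), q₇(z) = Δt(−6z³e^{−3z} − 11z²e^{−3z} − 12z e^{−3z} − 6e^{−3z} + 2z² − 6z + 6)/(6z⁴). Then as z → 0 one has q₄(z) → 3Δt/8, q₅(z) → 9Δt/8, q₆(z) → 9Δt/8, and q₇(z) → 3Δt/8 (the Newton–Cotes 3/8 weights). -/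
/-!
Each coefficient has the form `Δt (a(z) + b(z) e^{-3z}) / (k z⁴)` with polynomials `a`, `b`. For
the Taylor polynomial `T₄` of degree four of `e^{-3z}`, `a + b T₄` is divisible by `z⁴`, say
`a + b T₄ = z⁴ p`, so the coefficient equals `Δt (p(z) + b(z) (e^{-3z} - T₄(z)) / z⁴) / k`. The
second term tends to zero because the Taylor remainder is `o(z⁴)`, and `Δt p(0) / k` is the
three-eighths weight.
-/

open Filter Topology Asymptotics Finset Nat

theorem Complex.tendsto_exp_mul_sub_taylor_div_pow (c : ℂ) (n : ℕ) :
    Tendsto (fun z : ℂ => (exp (c * z) - ∑ i ∈ range (n + 1), (c * z) ^ i / i !) / z ^ n)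
      (𝓝 0) (𝓝 0) := by
  have hcz : Tendsto (fun z : ℂ => c * z) (𝓝 0) (𝓝 0) := by
    simpa using (continuous_const_mul c).tendsto 0
  refine IsLittleO.tendsto_div_nhds_zero <|
    ((exp_sub_sum_range_succ_isLittleO_pow n).comp_tendsto hcz).trans_isBigO ?_
  simp only [Function.comp_def, mul_pow]
  exact isBigO_const_mul_self _ _ _

theorem sum_range_five_neg_three_mul_pow_div_factorial (z : ℂ) :
    ∑ i ∈ range (4 + 1), (-3 * z) ^ i / i ! =
      1 - 3 * z + 9 / 2 * z ^ 2 - 9 / 2 * z ^ 3 + 27 / 8 * z ^ 4 := by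
  simp only [sum_range_succ, sum_range_zero, factorial]
  ring

theorem tendsto_of_eq_add_mul_exp_taylor_remainder {f p q : ℂ → ℂ} {c L : ℂ} {n : ℕ}
    (hp : ContinuousAt p 0) (hq : ContinuousAt q 0) (hL : p 0 = L)
    (hf : ∀ z ≠ 0, f z = p z + q z *
      ((Complex.exp (c * z) - ∑ i ∈ range (n + 1), (c * z) ^ i / i !) / z ^ n)) :
    Tendsto f (𝓝[≠] 0) (𝓝 L) := by
  have h := hp.tendsto.add (hq.tendsto.mul (Complex.tendsto_exp_mul_sub_taylor_div_pow c n))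
  rw [mul_zero, add_zero, hL] at h
  exact (h.mono_left nhdsWithin_le_nhds).congr'
    (eventually_nhdsWithin_of_forall fun z hz => (hf z hz).symm)

theorem cubic_filon_coeffs_three_eighths_limit_general (Δt : ℝ) :
    Tendsto (fun z : ℂ => (Δt : ℂ) * (2 * z ^ 2 * Complex.exp (-3 * z)
        + 6 * z * Complex.exp (-3 * z) + 6 * Complex.exp (-3 * z)
        + 6 * z ^ 3 + 12 * z - 11 * z ^ 2 - 6) / (6 * z ^ 4))
      (nhdsWithin 0 {(0 : ℂ)}ᶜ) (nhds (3 * (Δt : ℂ) / 8)) ∧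
    Tendsto (fun z : ℂ => (Δt : ℂ) * (-3 * z ^ 2 * Complex.exp (-3 * z)
        - 8 * z * Complex.exp (-3 * z) - 6 * Complex.exp (-3 * z)
        + 6 * z ^ 2 - 10 * z + 6) / (2 * z ^ 4))
      (nhdsWithin 0 {(0 : ℂ)}ᶜ) (nhds (9 * (Δt : ℂ) / 8)) ∧
    Tendsto (fun z : ℂ => (Δt : ℂ) * (6 * z ^ 2 * Complex.exp (-3 * z)
        + 10 * z * Complex.exp (-3 * z) + 6 * Complex.exp (-3 * z)
        - 3 * z ^ 2 + 8 * z - 6) / (2 * z ^ 4))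
      (nhdsWithin 0 {(0 : ℂ)}ᶜ) (nhds (9 * (Δt : ℂ) / 8)) ∧
    Tendsto (fun z : ℂ => (Δt : ℂ) * (-6 * z ^ 3 * Complex.exp (-3 * z)
        - 11 * z ^ 2 * Complex.exp (-3 * z) - 12 * z * Complex.exp (-3 * z)
        - 6 * Complex.exp (-3 * z) + 2 * z ^ 2 - 6 * z + 6) / (6 * z ^ 4))
      (nhdsWithin 0 {(0 : ℂ)}ᶜ) (nhds (3 * (Δt : ℂ) / 8)) := by
  refine ⟨?_, ?_, ?_, ?_⟩
  · refine tendsto_of_eq_add_mul_exp_taylor_remainder (c := -3) (n := 4)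
      (p := fun z => Δt * (9 / 4 + 45 / 4 * z + 27 / 4 * z ^ 2) / 6)
      (q := fun z => Δt * (2 * z ^ 2 + 6 * z + 6) / 6) (by fun_prop) (by fun_prop) (by ring)
      fun z hz => ?_
    rw [sum_range_five_neg_three_mul_pow_div_factorial]
    field_simp
    ring
  · refine tendsto_of_eq_add_mul_exp_taylor_remainder (c := -3) (n := 4)
      (p := fun z => Δt * (9 / 4 - 27 / 2 * z - 81 / 8 * z ^ 2) / 2)
      (q := fun z => Δt * (-3 * z ^ 2 - 8 * z - 6) / 2) (by fun_prop) (by fun_prop) (by ring)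
      fun z hz => ?_
    rw [sum_range_five_neg_three_mul_pow_div_factorial]
    field_simp
    ring
  · refine tendsto_of_eq_add_mul_exp_taylor_remainder (c := -3) (n := 4)
      (p := fun z => Δt * (9 / 4 + 27 / 4 * z + 81 / 4 * z ^ 2) / 2)
      (q := fun z => Δt * (6 * z ^ 2 + 10 * z + 6) / 2) (by fun_prop) (by fun_prop) (by ring)
      fun z hz => ?_
    rw [sum_range_five_neg_three_mul_pow_div_factorial]
    field_simp
    ring
  · refine tendsto_of_eq_add_mul_exp_taylor_remainder (c := -3) (n := 4)
      (p := fun z => Δt * (9 / 4 - 18 * z - 81 / 8 * z ^ 2 - 81 / 4 * z ^ 3) / 6)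
      (q := fun z => Δt * (-6 * z ^ 3 - 11 * z ^ 2 - 12 * z - 6) / 6) (by fun_prop) (by fun_prop)
      (by ring) fun z hz => ?_
    rw [sum_range_five_neg_three_mul_pow_div_factorial]
    field_simp
    ring

/-- Three-eighths-rule limit of the cubic Filon coefficients as `z → 0`. -/
theorem cubic_filon_coeffs_three_eighths_limit (Δt : ℝ) (hΔt : 0 < Δt) :
    Tendsto (fun z : ℂ => (Δt : ℂ) * (2 * z ^ 2 * Complex.exp (-3 * z)
        + 6 * z * Complex.exp (-3 * z) + 6 * Complex.exp (-3 * z)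
        + 6 * z ^ 3 + 12 * z - 11 * z ^ 2 - 6) / (6 * z ^ 4))
      (nhdsWithin 0 {(0 : ℂ)}ᶜ) (nhds (3 * (Δt : ℂ) / 8)) ∧
    Tendsto (fun z : ℂ => (Δt : ℂ) * (-3 * z ^ 2 * Complex.exp (-3 * z)
        - 8 * z * Complex.exp (-3 * z) - 6 * Complex.exp (-3 * z)
        + 6 * z ^ 2 - 10 * z + 6) / (2 * z ^ 4))
      (nhdsWithin 0 {(0 : ℂ)}ᶜ) (nhds (9 * (Δt : ℂ) / 8)) ∧
    Tendsto (fun z : ℂ => (Δt : ℂ) * (6 * z ^ 2 * Complex.exp (-3 * z)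
        + 10 * z * Complex.exp (-3 * z) + 6 * Complex.exp (-3 * z)
        - 3 * z ^ 2 + 8 * z - 6) / (2 * z ^ 4))
      (nhdsWithin 0 {(0 : ℂ)}ᶜ) (nhds (9 * (Δt : ℂ) / 8)) ∧
    Tendsto (fun z : ℂ => (Δt : ℂ) * (-6 * z ^ 3 * Complex.exp (-3 * z)
        - 11 * z ^ 2 * Complex.exp (-3 * z) - 12 * z * Complex.exp (-3 * z)
        - 6 * Complex.exp (-3 * z) + 2 * z ^ 2 - 6 * z + 6) / (6 * z ^ 4))
      (nhdsWithin 0 {(0 : ℂ)}ᶜ) (nhds (3 * (Δt : ℂ) / 8)) :=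
  cubic_filon_coeffs_three_eighths_limit_general Δt
end

section
/- Matrix trapezoidal Filon quadrature is exact on the linear interpolant: let n be a finite index type, let L be an invertible n×n complex matrix, let Δt > 0, set L̃ = Δt·L, and let G₀, G₁ ∈ ℂⁿ. Define the matrices A = Δt · L̃⁻² (exp(−L̃) + L̃ − 1) and B = Δt · L̃⁻² (1 − L̃·exp(−L̃) − exp(−L̃)), where 1 denotes the identity matrix. Then for every s ∈ ℝ, ∫_{s}^{s+Δt} (exp((s−τ)L)).mulVec ( G₀ + ((τ−s)/Δt) • (G₁ − G₀) ) dτ = A.mulVec G₀ + B.mulVec G₁. -/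
/-!
After the substitution `u = τ - s` the integral is `∫₀^Δt e^{-uL} (G₀ + (u/Δt)(G₁ - G₀)) du`.
Since `L⁻¹ L = 1`, the functions `-L⁻¹ e^{-uL}` and `-(u L⁻¹ + L⁻²) e^{-uL}` are antiderivatives
of `e^{-uL}` and `u e^{-uL}`, which gives closed forms for these two moments. Expanding
`L̃⁻² = Δt⁻² L⁻²` shows that `A + B` is the zeroth moment and `Δt B` the first, and
`A G₀ + B G₁ = (A + B) G₀ + B (G₁ - G₀)`.
-/

open MeasureTheory intervalIntegral NormedSpace Matrix

section BanachAlgebra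

variable {𝔸 : Type*} [NormedRing 𝔸] [NormedAlgebra ℝ 𝔸] [CompleteSpace 𝔸] {a b : 𝔸}

variable (a) in
theorem hasDerivAt_exp_neg_smul (u : ℝ) :
    HasDerivAt (fun u : ℝ => exp (-(u • a))) (-(a * exp (-(u • a)))) u := by
  simpa using hasDerivAt_exp_smul_const' (𝕂 := ℝ) (-a) u

variable (a) in
theorem continuous_exp_neg_smul : Continuous fun u : ℝ => exp (-(u • a)) :=
  continuous_iff_continuousAt.2 fun u => (hasDerivAt_exp_neg_smul a u).continuousAt

theorem integral_exp_neg_smul (hba : b * a = 1) (h : ℝ) :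
    ∫ u in 0..h, exp (-(u • a)) = b * (1 - exp (-(h • a))) := by
  have hF (u : ℝ) : HasDerivAt (fun u : ℝ => -(b * exp (-(u • a)))) (exp (-(u • a))) u := by
    refine ((hasDerivAt_exp_neg_smul a u).const_mul b).fun_neg.congr_deriv ?_
    rw [mul_neg, neg_neg, ← mul_assoc, hba, one_mul]
  rw [integral_eq_sub_of_hasDerivAt (fun u _ => hF u)
    ((continuous_exp_neg_smul a).intervalIntegrable _ _)]
  simp only [zero_smul, neg_zero, exp_zero, mul_one, mul_sub]
  abel

theorem integral_smul_exp_neg_smul (hba : b * a = 1) (h : ℝ) :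
    ∫ u in 0..h, u • exp (-(u • a)) = b ^ 2 * (1 - exp (-(h • a))) - h • (b * exp (-(h • a))) := by
  have hF (u : ℝ) : HasDerivAt (fun u : ℝ => -((u • b + b ^ 2) * exp (-(u • a))))
      (u • exp (-(u • a))) u := by
    have hlin : HasDerivAt (fun u : ℝ => u • b + b ^ 2) b u := by
      simpa using ((hasDerivAt_id u).smul_const b).add_const (b ^ 2)
    refine (hlin.mul (hasDerivAt_exp_neg_smul a u)).fun_neg.congr_deriv ?_
    simp only [mul_neg, add_mul, smul_mul_assoc, pow_two, mul_assoc, ← mul_assoc b a, hba, one_mul]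
    abel
  rw [integral_eq_sub_of_hasDerivAt (fun u _ => hF u)
    ((continuous_id.smul (continuous_exp_neg_smul a)).intervalIntegrable _ _)]
  simp only [zero_smul, neg_zero, exp_zero, mul_one, zero_add, mul_sub, add_mul, smul_mul_assoc]
  abel

theorem integral_clm_exp_neg_smul_add_smul {F : Type*} [NormedAddCommGroup F]
    [NormedSpace ℝ F] [CompleteSpace F] (hba : b * a = 1) (h : ℝ) (S T : 𝔸 →L[ℝ] F) :
    ∫ u in 0..h, S (exp (-(u • a))) + u • T (exp (-(u • a)))
      = S (b * (1 - exp (-(h • a))))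
        + T (b ^ 2 * (1 - exp (-(h • a))) - h • (b * exp (-(h • a)))) := by
  have hcont := continuous_exp_neg_smul a
  simp_rw [← T.map_smul]
  rw [intervalIntegral.integral_add, S.intervalIntegral_comp_comm, T.intervalIntegral_comp_comm,
    integral_exp_neg_smul hba, integral_smul_exp_neg_smul hba]
  all_goals exact Continuous.intervalIntegrable (by fun_prop) _ _

end BanachAlgebra

namespace Matrix

variable {n : Type*} [Fintype n] [DecidableEq n]

section Weights

variable {𝕜 K : Type*} [Field 𝕜] [CommRing K] [Algebra 𝕜 K] {L : Matrix n n K} {h : 𝕜}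

theorem inv_smul_of_ne_zero (hL : IsUnit L) (hh : h ≠ 0) : (h • L)⁻¹ = h⁻¹ • L⁻¹ :=
  inv_eq_left_inv <| by
    rw [smul_mul_smul_comm, inv_mul_cancel₀ hh, one_smul,
      nonsing_inv_mul L ((isUnit_iff_isUnit_det L).mp hL)]

theorem inv_sq_mul_mul_cancel_left (hL : IsUnit L) (X : Matrix n n K) :
    L⁻¹ ^ 2 * (L * X) = L⁻¹ * X := by
  rw [sq, mul_assoc, ← mul_assoc L⁻¹ L, nonsing_inv_mul L ((isUnit_iff_isUnit_det L).mp hL),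
    one_mul]

theorem filon_weight_sum (hL : IsUnit L) (hh : h ≠ 0) (E : Matrix n n K) :
    h • ((h • L)⁻¹ ^ 2 * (E + h • L - 1)) + h • ((h • L)⁻¹ ^ 2 * (1 - h • L * E - E))
      = L⁻¹ * (1 - E) := by
  have hsum : E + h • L - 1 + (1 - h • L * E - E) = h • (L * (1 - E)) := by
    rw [mul_sub, mul_one, smul_sub, smul_mul_assoc]; abel
  rw [← smul_add, ← mul_add, hsum, inv_smul_of_ne_zero hL hh, smul_pow, smul_mul_assoc,
    mul_smul_comm, inv_sq_mul_mul_cancel_left hL, smul_smul, smul_smul,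
    show h * h⁻¹ ^ 2 * h = 1 by field_simp, one_smul]

theorem filon_weight_linear (hL : IsUnit L) (hh : h ≠ 0) (E : Matrix n n K) :
    h • ((h • L)⁻¹ ^ 2 * (1 - h • L * E - E)) = h⁻¹ • (L⁻¹ ^ 2 * (1 - E) - h • (L⁻¹ * E)) := by
  have hsplit : 1 - h • L * E - E = (1 - E) - h • (L * E) := by
    rw [smul_mul_assoc]; abel
  rw [hsplit, inv_smul_of_ne_zero hL hh, smul_pow, smul_mul_assoc, mul_sub, mul_smul_comm,
    inv_sq_mul_mul_cancel_left hL, smul_smul,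
    show h * h⁻¹ ^ 2 = h⁻¹ by field_simp]

end Weights

section Integral

-- The operator norm only serves to make `Matrix n n ℂ` a Banach algebra. Matrix-valued integrals
-- are reached through continuous linear maps and never written out: instance search would pick
-- `instTopologicalSpaceMatrix`, which is not reducibly the norm topology, and fail.
attribute [local instance] Matrix.linftyOpNormedRing Matrix.linftyOpNormedAlgebra

theorem integral_exp_neg_smul_mulVec_add_smul {L : Matrix n n ℂ} (hL : IsUnit L) (h : ℝ)
    (v w : n → ℂ) :
    ∫ u in 0..h, exp (-(u • L)) *ᵥ (v + u • w)
      = (L⁻¹ * (1 - exp (-(h • L)))) *ᵥ v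
        + (L⁻¹ ^ 2 * (1 - exp (-(h • L))) - h • (L⁻¹ * exp (-(h • L)))) *ᵥ w := by
  have hinv := nonsing_inv_mul L ((isUnit_iff_isUnit_det L).mp hL)
  let T (x : n → ℂ) : Matrix n n ℂ →L[ℝ] n → ℂ :=
    LinearMap.toContinuousLinearMap ((mulVecBilin ℝ ℂ).flip x)
  have hsplit (u : ℝ) : exp (-(u • L)) *ᵥ (v + u • w)
      = T v (exp (-(u • L))) + u • T w (exp (-(u • L))) := by
    rw [mulVec_add, mulVec_smul]; rfl
  rw [integral_congr fun u _ => hsplit u]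
  exact integral_clm_exp_neg_smul_add_smul hinv h (T v) (T w)

end Integral

end Matrix

/-- Matrix trapezoidal Filon quadrature is exact on the linear interpolant. -/
theorem matrix_trapezoidal_filon_exact_on_linear {n : Type*} [Fintype n] [DecidableEq n]
    (L : Matrix n n ℂ) (hL : IsUnit L) (Δt : ℝ) (hΔt : 0 < Δt)
    (G₀ G₁ : n → ℂ)
    (Lt A B : Matrix n n ℂ)
    (hLt : Lt = Δt • L)
    (hA : A = Δt • ((Lt⁻¹) ^ 2 * (NormedSpace.exp (-Lt) + Lt - 1)))
    (hB : B = Δt • ((Lt⁻¹) ^ 2 * (1 - Lt * NormedSpace.exp (-Lt) - NormedSpace.exp (-Lt)))) :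
    ∀ s : ℝ,
      (∫ τ in s..(s + Δt), (NormedSpace.exp ((s - τ) • L)).mulVec
        (G₀ + ((τ - s) / Δt) • (G₁ - G₀)))
      = A.mulVec G₀ + B.mulVec G₁ := by
  intro s
  set E := exp (-(Δt • L))
  set f : ℝ → n → ℂ := fun u => exp (-(u • L)) *ᵥ (G₀ + u • Δt⁻¹ • (G₁ - G₀))
  have hshift : ∫ τ in s..s + Δt, exp ((s - τ) • L) *ᵥ (G₀ + ((τ - s) / Δt) • (G₁ - G₀))
      = ∫ u in 0..Δt, f u := by
    calc _ = ∫ τ in s..s + Δt, f (τ - s) := integral_congr fun τ _ => by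
            rw [← neg_sub τ s, neg_smul, div_eq_mul_inv, ← smul_smul]
      _ = ∫ u in 0..Δt, f u := by rw [integral_comp_sub_right, sub_self, add_sub_cancel_left]
  have hAB : A + B = L⁻¹ * (1 - E) := by
    rw [hA, hB, hLt]; exact filon_weight_sum hL hΔt.ne' E
  have hBΔt : B = Δt⁻¹ • (L⁻¹ ^ 2 * (1 - E) - Δt • (L⁻¹ * E)) := by
    rw [hB, hLt]; exact filon_weight_linear hL hΔt.ne' E
  rw [hshift, integral_exp_neg_smul_mulVec_add_smul hL, ← hAB, mulVec_smul, ← smul_mulVec, ← hBΔt,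
    add_mulVec, mulVec_sub]
  abel
end

section
/- Conservation of the fourth Kruskal invariant for periodic KdV: let ε ∈ ℝ, P > 0, and let u : ℝ × ℝ → ℝ be smooth, satisfy u(x + P, t) = u(x, t) for all x and t, and solve ∂ₜu + u ∂ₓu + ε² ∂ₓ³u = 0 everywhere. Then 𝒬₄(t) = ∫₀ᴾ ( u⁴/4 − 3ε² u (∂ₓu)² + (9ε⁴/5)(∂ₓ²u)² ) dx is constant in t. -/
open MeasureTheory intervalIntegral

noncomputable def pd (w : ℝ × ℝ) (f : ℝ × ℝ → ℝ) : ℝ × ℝ → ℝ := fun p => fderiv ℝ f p w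

lemma pd_contDiff {f : ℝ × ℝ → ℝ} (hf : ContDiff ℝ (⊤:ℕ∞) f) (w : ℝ × ℝ) :
    ContDiff ℝ (⊤:ℕ∞) (pd w f) := by
  have h1 : ContDiff ℝ (⊤:ℕ∞) (fderiv ℝ f) := hf.fderiv_right (by exact_mod_cast le_rfl)
  exact h1.clm_apply contDiff_const

lemma pd_differentiable {f : ℝ × ℝ → ℝ} (hf : ContDiff ℝ (⊤:ℕ∞) f) (w : ℝ × ℝ) :
    Differentiable ℝ (pd w f) :=
  (pd_contDiff hf w).differentiable (by simp)

lemma hasDerivAt_sliceX {f : ℝ × ℝ → ℝ} (hf : Differentiable ℝ f) (x t : ℝ) :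
    HasDerivAt (fun x' => f (x', t)) (pd (1,0) f (x,t)) x :=
  (hf (x,t)).hasFDerivAt.comp_hasDerivAt x ((hasDerivAt_id x).prodMk (hasDerivAt_const x t))

lemma hasDerivAt_sliceT {f : ℝ × ℝ → ℝ} (hf : Differentiable ℝ f) (x t : ℝ) :
    HasDerivAt (fun t' => f (x, t')) (pd (0,1) f (x,t)) t :=
  (hf (x,t)).hasFDerivAt.comp_hasDerivAt t ((hasDerivAt_const t x).prodMk (hasDerivAt_id t))

lemma pd_comm {f : ℝ × ℝ → ℝ} (hf : ContDiff ℝ (⊤:ℕ∞) f) (v w p : ℝ × ℝ) :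
    pd v (pd w f) p = pd w (pd v f) p := by
  have hsymm : IsSymmSndFDerivAt ℝ f p :=
    (hf.contDiffAt).isSymmSndFDerivAt (by simp; exact WithTop.coe_le_coe.mpr le_top)
  have hfd : ContDiff ℝ (⊤:ℕ∞) (fderiv ℝ f) := hf.fderiv_right (by exact_mod_cast le_rfl)
  have key : ∀ a b : ℝ × ℝ, pd a (pd b f) p = fderiv ℝ (fderiv ℝ f) p a b := by
    intro a b
    show fderiv ℝ (fun q => fderiv ℝ f q b) p a = _
    rw [fderiv_clm_apply (hfd.differentiable (by simp) p) (differentiableAt_const b)]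
    simp
  rw [key, key, hsymm]

lemma pd_shift {f : ℝ × ℝ → ℝ} (hf : Differentiable ℝ f) (c : ℝ × ℝ)
    (hper : ∀ p, f (p + c) = f p) (w p : ℝ × ℝ) : pd w f (p + c) = pd w f p := by
  have h1 : HasFDerivAt (fun q => f (q + c)) (fderiv ℝ f (p + c)) p := by
    have := (hf (p + c)).hasFDerivAt.comp p ((hasFDerivAt_id p).add_const c)
    exact this
  have h2 : HasFDerivAt f (fderiv ℝ f (p + c)) p := by
    have : (fun q => f (q + c)) = f := funext hper
    rwa [this] at h1
  show fderiv ℝ f (p + c) w = fderiv ℝ f p w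
  rw [h2.fderiv]

/-- Conservation of the fourth Kruskal invariant for periodic KdV with `α = 1`. -/
theorem kdv_periodic_fourth_invariant_conservation (ε P : ℝ) (hP : 0 < P) (u : ℝ → ℝ → ℝ)
    (hu : ContDiff ℝ (⊤ : ℕ∞) (Function.uncurry u))
    (hper : ∀ x t : ℝ, u (x + P) t = u x t)
    (hpde : ∀ x t : ℝ, deriv (fun t' => u x t') t
      + u x t * deriv (fun x' => u x' t) x
      + ε ^ 2 * iteratedDeriv 3 (fun x' => u x' t) x = 0) :
    ∀ t₁ t₂ : ℝ,
      (∫ x in (0:ℝ)..P, ((u x t₁) ^ 4 / 4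
        - 3 * ε ^ 2 * u x t₁ * (deriv (fun x' => u x' t₁) x) ^ 2
        + 9 * ε ^ 4 / 5 * (iteratedDeriv 2 (fun x' => u x' t₁) x) ^ 2))
      = ∫ x in (0:ℝ)..P, ((u x t₂) ^ 4 / 4
        - 3 * ε ^ 2 * u x t₂ * (deriv (fun x' => u x' t₂) x) ^ 2
        + 9 * ε ^ 4 / 5 * (iteratedDeriv 2 (fun x' => u x' t₂) x) ^ 2) := by
  have hus : ContDiff ℝ (⊤:ℕ∞) (Function.uncurry u) := hu.of_le (by simp)
  set U : ℕ → ℝ × ℝ → ℝ := fun k => (pd (1,0))^[k] (Function.uncurry u) with hUdef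
  have hUzero : U 0 = Function.uncurry u := rfl
  have hUsucc : ∀ k, U (k+1) = pd (1,0) (U k) := fun k => Function.iterate_succ_apply' _ _ _
  have hU : ∀ k, ContDiff ℝ (⊤:ℕ∞) (U k) := by
    intro k; induction k with
    | zero => exact hus
    | succ k ih => rw [hUsucc]; exact pd_contDiff ih _
  have hUd : ∀ k, Differentiable ℝ (U k) :=
    fun k => (hU k).differentiable (by simp)
  have hx : ∀ k (x t : ℝ), HasDerivAt (fun x' => U k (x', t)) (U (k+1) (x,t)) x := by
    intro k x t; rw [hUsucc]; exact hasDerivAt_sliceX (hUd k) x t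
  have ht : ∀ k (x t : ℝ), HasDerivAt (fun t' => U k (x, t')) (pd (0,1) (U k) (x,t)) t :=
    fun k x t => hasDerivAt_sliceT (hUd k) x t
  -- bridging to deriv/iteratedDeriv of slices
  have hiter : ∀ k (x t : ℝ), iteratedDeriv k (fun x' => u x' t) x = U k (x,t) := by
    intro k; induction k with
    | zero => intro x t; rw [iteratedDeriv_zero]; rfl
    | succ k ih =>
      intro x t
      rw [iteratedDeriv_succ]
      have he : iteratedDeriv k (fun x' => u x' t) = fun x' => U k (x', t) :=
        funext fun x' => ih x' t
      rw [he]
      exact (hx k x t).deriv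
  have hd1 : ∀ (x t : ℝ), deriv (fun x' => u x' t) x = U 1 (x,t) :=
    fun x t => (hx 0 x t).deriv
  -- the PDE in terms of U
  have hDt0 : ∀ p : ℝ × ℝ, pd (0,1) (U 0) p = -(U 0 p * U 1 p + ε^2 * U 3 p) := by
    rintro ⟨x, t⟩
    have h1 : deriv (fun t' => u x t') t = pd (0,1) (U 0) (x,t) := (ht 0 x t).deriv
    have h2 := hpde x t
    rw [h1, hd1 x t, hiter 3 x t] at h2
    have : U 0 (x,t) = u x t := rfl
    rw [this]
    linarith
  have uniq : ∀ {f : ℝ × ℝ → ℝ}, Differentiable ℝ f → ∀ {x t d : ℝ},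
      HasDerivAt (fun x' => f (x', t)) d x → pd (1,0) f (x,t) = d :=
    fun hf _ _ _ h => (hasDerivAt_sliceX hf _ _).unique h
  have hDt1 : ∀ p : ℝ × ℝ, pd (0,1) (U 1) p
      = -((U 1 p)^2 + U 0 p * U 2 p + ε^2 * U 4 p) := by
    rintro ⟨x, t⟩
    rw [hUsucc 0, pd_comm (hU 0) (0,1) (1,0) (x,t)]
    have hg : pd (0,1) (U 0) = fun p => -(U 0 p * U 1 p + ε^2 * U 3 p) := funext hDt0
    rw [hg]
    have hdiff : Differentiable ℝ (fun p => -(U 0 p * U 1 p + ε^2 * U 3 p)) :=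
      (((hUd 0).mul (hUd 1)).add ((hUd 3).const_mul (ε^2))).neg
    have hcomb : HasDerivAt (fun x' => -(U 0 (x',t) * U 1 (x',t) + ε^2 * U 3 (x',t)))
        (-((U 1 (x,t))^2 + U 0 (x,t) * U 2 (x,t) + ε^2 * U 4 (x,t))) x := by
      have := (((hx 0 x t).fun_mul (hx 1 x t)).add ((hx 3 x t).const_mul (ε^2))).neg
      exact this.congr_deriv (by ring)
    exact uniq hdiff hcomb
  have hDt2 : ∀ p : ℝ × ℝ, pd (0,1) (U 2) p
      = -(3 * U 1 p * U 2 p + U 0 p * U 3 p + ε^2 * U 5 p) := by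
    rintro ⟨x, t⟩
    rw [hUsucc 1, pd_comm (hU 1) (0,1) (1,0) (x,t)]
    have hg : pd (0,1) (U 1) = fun p => -((U 1 p)^2 + U 0 p * U 2 p + ε^2 * U 4 p) :=
      funext hDt1
    rw [hg]
    have hdiff : Differentiable ℝ (fun p => -((U 1 p)^2 + U 0 p * U 2 p + ε^2 * U 4 p)) :=
      ((((hUd 1).pow 2).add ((hUd 0).mul (hUd 2))).add ((hUd 4).const_mul (ε^2))).neg
    have hcomb : HasDerivAt (fun x' => -((U 1 (x',t))^2 + U 0 (x',t) * U 2 (x',t) + ε^2 * U 4 (x',t)))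
        (-(3 * U 1 (x,t) * U 2 (x,t) + U 0 (x,t) * U 3 (x,t) + ε^2 * U 5 (x,t))) x := by
      have := ((((hx 1 x t).fun_pow 2).add ((hx 0 x t).fun_mul (hx 2 x t))).add
        ((hx 4 x t).const_mul (ε^2))).neg
      exact this.congr_deriv (by ring)
    exact uniq hdiff hcomb
  -- the density and the flux
  set Q : ℝ × ℝ → ℝ := fun p =>
    (U 0 p)^4/4 - 3*ε^2*U 0 p*(U 1 p)^2 + 9*ε^4/5*(U 2 p)^2 with hQdef
  set X : ℝ × ℝ → ℝ := fun p =>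
    -(U 0 p)^5/5 + 9/2*ε^2*(U 0 p)^2*(U 1 p)^2 - ε^2*(U 0 p)^3*(U 2 p)
      - 3*ε^4*(U 1 p)^2*(U 2 p) - 24/5*ε^4*(U 0 p)*(U 2 p)^2
      + 6*ε^4*(U 0 p)*(U 1 p)*(U 3 p) + 9/5*ε^6*(U 3 p)^2
      - 18/5*ε^6*(U 2 p)*(U 4 p) with hXdef
  have hQs : ContDiff ℝ (⊤:ℕ∞) Q := by
    rw [hQdef]
    exact ((((hU 0).pow 4).div_const 4).sub
        ((contDiff_const.mul (hU 0)).mul ((hU 1).pow 2))).add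
      (contDiff_const.mul ((hU 2).pow 2))
  have hXs : ContDiff ℝ (⊤:ℕ∞) X := by
    rw [hXdef]
    exact (((((((((hU 0).pow 5).neg).div_const 5).add
        ((contDiff_const.mul ((hU 0).pow 2)).mul ((hU 1).pow 2))).sub
        ((contDiff_const.mul ((hU 0).pow 3)).mul (hU 2))).sub
        ((contDiff_const.mul ((hU 1).pow 2)).mul (hU 2))).sub
        ((contDiff_const.mul (hU 0)).mul ((hU 2).pow 2))).add
        (((contDiff_const.mul (hU 0)).mul (hU 1)).mul (hU 3))).add
        (contDiff_const.mul ((hU 3).pow 2)) |>.sub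
        ((contDiff_const.mul (hU 2)).mul (hU 4))
  have hQd : Differentiable ℝ Q := hQs.differentiable (by simp)
  have hXd : Differentiable ℝ X := hXs.differentiable (by simp)
  -- the key pointwise identity : ∂ₜ Q = ∂ₓ X
  have keyQX : ∀ x t : ℝ, pd (0,1) Q (x,t) = pd (1,0) X (x,t) := by
    intro x t
    have ht0 := ht 0 x t; rw [hDt0 (x,t)] at ht0
    have ht1 := ht 1 x t; rw [hDt1 (x,t)] at ht1
    have ht2 := ht 2 x t; rw [hDt2 (x,t)] at ht2
    have hx0 := hx 0 x t
    have hx1 := hx 1 x t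
    have hx2 := hx 2 x t
    have hx3 := hx 3 x t
    have hx4 := hx 4 x t
    have hcombL := (((ht0.fun_pow 4).div_const 4).sub
        ((ht0.const_mul (3*ε^2)).fun_mul (ht1.fun_pow 2))).add
      ((ht2.fun_pow 2).const_mul (9*ε^4/5))
    have hcombR := (((((((((hx0.fun_pow 5).neg).div_const 5).add
        (((hx0.fun_pow 2).const_mul (9/2*ε^2)).fun_mul (hx1.fun_pow 2))).sub
        (((hx0.fun_pow 3).const_mul (ε^2)).fun_mul hx2)).sub
        (((hx1.fun_pow 2).const_mul (3*ε^4)).fun_mul hx2)).sub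
        ((hx0.const_mul (24/5*ε^4)).fun_mul (hx2.fun_pow 2))).add
        (((hx0.const_mul (6*ε^4)).fun_mul hx1).fun_mul hx3)).add
        ((hx3.fun_pow 2).const_mul (9/5*ε^6))).sub
        ((hx2.const_mul (18/5*ε^6)).fun_mul hx4)
    have hLval := (hasDerivAt_sliceT hQd x t).unique hcombL
    have hRval := (hasDerivAt_sliceX hXd x t).unique hcombR
    rw [hLval, hRval]
    push_cast
    ring
  -- periodicity
  have hUper : ∀ k (p : ℝ × ℝ), U k (p + (P, 0)) = U k p := by
    intro k; induction k with
    | zero =>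
      rintro ⟨x, t⟩
      show Function.uncurry u ((x,t) + (P,0)) = Function.uncurry u (x,t)
      have : (x,t) + (P,(0:ℝ)) = (x + P, t) := by simp [Prod.ext_iff]
      rw [this]
      exact hper x t
    | succ k ih =>
      intro p
      rw [hUsucc]
      exact pd_shift (hUd k) (P,0) ih (1,0) p
  have hXper : ∀ p : ℝ × ℝ, X (p + (P, 0)) = X p := by
    intro p
    rw [hXdef]
    simp only [hUper]
  -- integral of ∂ₓ X over a period vanishes
  have hXint : ∀ t : ℝ, (∫ x in (0:ℝ)..P, pd (1,0) X (x,t)) = 0 := by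
    intro t
    have h1 : ∀ x ∈ Set.uIcc (0:ℝ) P, HasDerivAt (fun x' => X (x',t)) (pd (1,0) X (x,t)) x :=
      fun x _ => hasDerivAt_sliceX hXd x t
    have h2 : ContinuousOn (fun x => pd (1,0) X (x,t)) (Set.uIcc (0:ℝ) P) :=
      ((pd_contDiff hXs (1,0)).continuous.comp
        (continuous_id.prodMk continuous_const)).continuousOn
    rw [intervalIntegral.integral_eq_sub_of_hasDerivAt h1 (h2.intervalIntegrable)]
    have h3 := hXper (0, t)
    have h4 : ((0:ℝ),t) + (P,(0:ℝ)) = (P, t) := by simp [Prod.ext_iff]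
    rw [h4] at h3
    rw [h3, sub_self]
  -- differentiation under the integral sign
  set F : ℝ → ℝ := fun τ => ∫ x in (0:ℝ)..P, Q (x, τ) with hFdef
  have hQc : Continuous Q := hQs.continuous
  have hQtc : Continuous (pd (0,1) Q) := (pd_contDiff hQs (0,1)).continuous
  have hF0 : ∀ t₀ : ℝ, HasDerivAt F 0 t₀ := by
    intro t₀
    obtain ⟨C, hC⟩ : ∃ C, ∀ q ∈ (Set.uIcc (0:ℝ) P) ×ˢ (Metric.closedBall t₀ 1),
        ‖pd (0,1) Q q‖ ≤ C :=
      (isCompact_uIcc.prod (isCompact_closedBall t₀ 1)).exists_bound_of_continuousOn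
        hQtc.continuousOn
    have main := (intervalIntegral.hasDerivAt_integral_of_dominated_loc_of_deriv_le
      (F := fun τ x => Q (x, τ)) (F' := fun τ x => pd (0,1) Q (x, τ))
      (bound := fun _ => C) (a := 0) (b := P) (μ := volume) (x₀ := t₀)
      (Metric.ball_mem_nhds t₀ one_pos)
      (Filter.Eventually.of_forall fun τ =>
        ((hQc.comp (continuous_id.prodMk continuous_const)).aestronglyMeasurable))
      ((hQc.comp (continuous_id.prodMk continuous_const)).intervalIntegrable 0 P)
      ((hQtc.comp (continuous_id.prodMk continuous_const)).aestronglyMeasurable)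
      (Filter.Eventually.of_forall fun x hx τ hτ =>
        hC (x, τ) ⟨Set.uIoc_subset_uIcc hx, Metric.ball_subset_closedBall hτ⟩)
      (intervalIntegrable_const)
      (Filter.Eventually.of_forall fun x _ τ _ => hasDerivAt_sliceT hQd x τ)).2
    have hzero : (∫ x in (0:ℝ)..P, pd (0,1) Q (x, t₀)) = 0 := by
      rw [intervalIntegral.integral_congr (g := fun x => pd (1,0) X (x, t₀))
        (fun x _ => keyQX x t₀)]
      exact hXint t₀
    rw [hzero] at main
    exact main
  -- conclusion
  intro t₁ t₂
  have hcong : ∀ t : ℝ, (∫ x in (0:ℝ)..P, ((u x t) ^ 4 / 4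
      - 3 * ε ^ 2 * u x t * (deriv (fun x' => u x' t) x) ^ 2
      + 9 * ε ^ 4 / 5 * (iteratedDeriv 2 (fun x' => u x' t) x) ^ 2)) = F t := by
    intro t
    rw [hFdef]
    apply intervalIntegral.integral_congr
    intro x _
    rw [hQdef]
    simp only
    rw [hd1 x t, hiter 2 x t]
    rfl
  rw [hcong t₁, hcong t₂]
  have hFdiff : Differentiable ℝ F := fun t => (hF0 t).differentiableAt
  exact is_const_of_deriv_eq_zero hFdiff (fun t => (hF0 t).deriv) t₁ t₂
end
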